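/- Let d = 2 and define E₁ : ℤ² → ℂ by E₁(n₁,n₂) := ((−1)^{max(|n₁|,|n₂|)} − (−1)^{min(|n₁|,|n₂|)})/8 + (i·((−1)^{n₁} + (−1)^{n₂})/(2π)) · [log 2 − Σ_{k=1}^{⌊|n₁+n₂|/2⌋} 1/(2k−1) − Σ_{k=1}^{⌊|n₁−n₂|/2⌋} 1/(2k−1)] (when n₁+n₂ is odd the factor (−1)^{n₁} + (−1)^{n₂} vanishes, so the floors are harmless). Then E₁ is a fundamental solution to H₀ − 4, i.e. for every n ∈ ℤ²: (H₀E₁)[n] − 4·E₁[n] = δ₀[n]. -/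
import Mathlib


/-- The function `E₁ : ℤ² → ℂ` from the paper: a fundamental solution to `H₀ - 4`
on the two-dimensional lattice. -/
noncomputable def E₁ (n : ℤ × ℤ) : ℂ :=
  ((-1 : ℂ) ^ (max n.1.natAbs n.2.natAbs) - (-1 : ℂ) ^ (min n.1.natAbs n.2.natAbs)) / 8
  + Complex.I * ((-1 : ℂ) ^ n.1 + (-1 : ℂ) ^ n.2) / (2 * (Real.pi : ℂ)) *
      ((Real.log 2 : ℂ)
        - ∑ k ∈ Finset.Icc 1 ((n.1 + n.2).natAbs / 2), 1 / (2 * (k : ℂ) - 1)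
        - ∑ k ∈ Finset.Icc 1 ((n.1 - n.2).natAbs / 2), 1 / (2 * (k : ℂ) - 1))

lemma neg_one_pow_mod (k : ℕ) : (-1:ℂ)^k = (-1)^(k % 2) := by
  conv_lhs => rw [← Nat.div_add_mod k 2]
  rw [pow_add, pow_mul]
  norm_num

lemma neg_one_zpow_odd {x y : ℤ} (h : (x + y) % 2 = 1) : (-1:ℂ)^y = -(-1:ℂ)^x := by
  have hxy : Odd (y - x) := by rw [Int.odd_iff]; omega
  have h2 : (-1:ℂ)^y = (-1:ℂ)^x * (-1:ℂ)^(y - x) := by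
    rw [← zpow_add₀ (by norm_num : (-1:ℂ) ≠ 0)]
    congr 1; ring
  rw [h2, hxy.neg_one_zpow]; ring

lemma E₁_odd {x y : ℤ} (h : (x + y) % 2 = 1) :
    E₁ (x, y) = (-1:ℂ) ^ ((max x.natAbs y.natAbs) % 2) / 4 := by
  have hv : (-1:ℂ)^y = -(-1:ℂ)^x := neg_one_zpow_odd h
  have hmm : (max x.natAbs y.natAbs) % 2 + (min x.natAbs y.natAbs) % 2 = 1 := by omega
  unfold E₁
  simp only
  rw [hv, neg_one_pow_mod (max x.natAbs y.natAbs), neg_one_pow_mod (min x.natAbs y.natAbs)]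
  rcases Nat.mod_two_eq_zero_or_one (max x.natAbs y.natAbs) with h1|h1 <;>
    rw [h1] <;> [rw [(by omega : (min x.natAbs y.natAbs) % 2 = 1)];
                 rw [(by omega : (min x.natAbs y.natAbs) % 2 = 0)]] <;>
    norm_num

lemma E₁_even {x y : ℤ} (h : (x + y) % 2 = 0) :
    E₁ (x, y) = Complex.I * ((-1 : ℂ) ^ x + (-1 : ℂ) ^ y) / (2 * (Real.pi : ℂ)) *
      ((Real.log 2 : ℂ)
        - ∑ k ∈ Finset.Icc 1 ((x + y).natAbs / 2), 1 / (2 * (k : ℂ) - 1)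
        - ∑ k ∈ Finset.Icc 1 ((x - y).natAbs / 2), 1 / (2 * (k : ℂ) - 1)) := by
  have hpar : (max x.natAbs y.natAbs) % 2 = (min x.natAbs y.natAbs) % 2 := by omega
  unfold E₁
  simp only
  rw [neg_one_pow_mod (max x.natAbs y.natAbs), neg_one_pow_mod (min x.natAbs y.natAbs), hpar]
  ring

lemma four_pow_sum (a b c d : ℕ) (h : a % 2 + b % 2 + c % 2 + d % 2 = 2) :
    (-1:ℂ)^(a % 2) + (-1:ℂ)^(b % 2) + (-1:ℂ)^(c % 2) + (-1:ℂ)^(d % 2) = 0 := by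
  rcases Nat.mod_two_eq_zero_or_one a with h1|h1 <;>
  rcases Nat.mod_two_eq_zero_or_one b with h2|h2 <;>
  rcases Nat.mod_two_eq_zero_or_one c with h3|h3 <;>
  rcases Nat.mod_two_eq_zero_or_one d with h4|h4 <;>
  rw [h1, h2, h3, h4] <;> first | (exfalso; omega) | norm_num

set_option maxHeartbeats 2000000 in
/-- `E₁` is a fundamental solution to `H₀ - 4`: `(H₀E₁)[n] - 4 E₁[n] = δ₀[n]`. -/
theorem E₁_fundamental_solution (n : ℤ × ℤ) :
    (2 * E₁ n - E₁ (n.1 + 1, n.2) - E₁ (n.1 - 1, n.2))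
      + (2 * E₁ n - E₁ (n.1, n.2 + 1) - E₁ (n.1, n.2 - 1))
      - 4 * E₁ n = if n = (0, 0) then 1 else 0 := by
  by_cases h0 : n = (0, 0)
  · subst h0
    rw [if_pos rfl]
    norm_num
    rw [E₁_odd (by decide : ((1:ℤ) + 0) % 2 = 1),
        E₁_odd (by decide : ((-1:ℤ) + 0) % 2 = 1),
        E₁_odd (by decide : ((0:ℤ) + 1) % 2 = 1),
        E₁_odd (by decide : ((0:ℤ) + -1) % 2 = 1)]
    norm_num
    ring
  · rw [if_neg h0]
    have hne : ¬(n.1 = 0 ∧ n.2 = 0) := by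
      rintro ⟨h1, h2⟩
      exact h0 (Prod.ext h1 h2)
    rcases Int.emod_two_eq_zero_or_one (n.1 + n.2) with heven | hodd
    · -- neighbors have odd coordinate-sum
      rw [E₁_odd (by omega : ((n.1 + 1) + n.2) % 2 = 1),
          E₁_odd (by omega : ((n.1 - 1) + n.2) % 2 = 1),
          E₁_odd (by omega : (n.1 + (n.2 + 1)) % 2 = 1),
          E₁_odd (by omega : (n.1 + (n.2 - 1)) % 2 = 1)]
      have hpar : (max (n.1+1).natAbs n.2.natAbs) % 2 + (max (n.1-1).natAbs n.2.natAbs) % 2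
          + (max n.1.natAbs (n.2+1).natAbs) % 2 + (max n.1.natAbs (n.2-1).natAbs) % 2 = 2 := by
        omega
      have h4 := four_pow_sum _ _ _ _ hpar
      linear_combination (-1/4 : ℂ) * h4
    · -- neighbors have even coordinate-sum
      rw [E₁_even (by omega : ((n.1 + 1) + n.2) % 2 = 0),
          E₁_even (by omega : ((n.1 - 1) + n.2) % 2 = 0),
          E₁_even (by omega : (n.1 + (n.2 + 1)) % 2 = 0),
          E₁_even (by omega : (n.1 + (n.2 - 1)) % 2 = 0)]
      rw [show n.1 + (n.2 + 1) = n.1 + 1 + n.2 from by ring,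
          show n.1 - (n.2 + 1) = n.1 - 1 - n.2 from by ring,
          show n.1 + (n.2 - 1) = n.1 - 1 + n.2 from by ring,
          show n.1 - (n.2 - 1) = n.1 + 1 - n.2 from by ring]
      have hm1 : (-1:ℂ) ≠ 0 := by norm_num
      rw [zpow_add_one₀ hm1 n.1, zpow_sub_one₀ hm1 n.1,
          zpow_add_one₀ hm1 n.2, zpow_sub_one₀ hm1 n.2,
          neg_one_zpow_odd hodd]
      ring
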